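/- Fix λ, σ, c > 0, γ ∈ [0,1), θ* ∈ ℝ^d, a finite ground set E with feature vectors φ_e ∈ ℝ^d satisfying ‖φ_e‖₂ ≤ 1, a family 𝒜 of subsets of E of size at most K, and mean weights w̄(e) = ⟨φ_e, θ*⟩. Suppose sets A^t ∈ 𝒜, weight observations w_t(e) for e ∈ A^t (t = 1,…,n), and the statistics Σ_t^{-1} = (1/λ²) I + (1/σ²) Σ_{τ<t} Σ_{e∈A^τ} φ_e φ_eᵀ and Σ_t^{-1} θ̄_t = (1/σ²) Σ_{τ<t} Σ_{e∈A^τ} φ_e w_τ(e) satisfy: (a) for all t ≤ n and all e ∈ E, |⟨φ_e, θ̄_t − θ*⟩| ≤ c √(φ_eᵀ Σ_t φ_e); and (b) each A^t is a γ-approximate maximizer of the UCB weights, i.e., Σ_{e∈A^t} ŵ_t(e) ≥ (1−γ) max_{A∈𝒜} Σ_{e∈A} ŵ_t(e), where ŵ_t(e) = ⟨φ_e, θ̄_t⟩ + c √(φ_eᵀ Σ_t φ_e). Then for any A^opt ∈ 𝒜 maximizing Σ_{e∈A} w̄(e) over 𝒜: Σ_{t=1}^n [ Σ_{e∈A^opt}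 w̄(e) − (1/(1−γ)) Σ_{e∈A^t} w̄(e) ] ≤ (2 c K λ / (1−γ)) √( d n ln(1 + nKλ²/(dσ²)) / ln(1 + λ²/σ²) ). -/

import Mathlib

open Matrix Finset

/-- The CombLinUCB covariance statistic:
Σ_t = ( (1/λ²) I + (1/σ²) Σ_{τ<t} Σ_{e∈A^τ} φ_e φ_eᵀ )⁻¹. -/
noncomputable def ucbSig {d L n : ℕ} (lam σ : ℝ) (φ : Fin L → Fin d → ℝ)
    (A : Fin n → Finset (Fin L)) (t : Fin n) : Matrix (Fin d) (Fin d) ℝ :=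
  ((lam ^ 2)⁻¹ • (1 : Matrix (Fin d) (Fin d) ℝ) +
    (σ ^ 2)⁻¹ • ∑ τ ∈ Finset.Iio t, ∑ e ∈ A τ, vecMulVec (φ e) (φ e))⁻¹

/-- The CombLinUCB mean statistic θ̄_t, i.e. the solution of
Σ_t⁻¹ θ̄_t = (1/σ²) Σ_{τ<t} Σ_{e∈A^τ} φ_e w_τ(e). -/
noncomputable def ucbTheta {d L n : ℕ} (lam σ : ℝ) (φ : Fin L → Fin d → ℝ)
    (A : Fin n → Finset (Fin L)) (w : Fin n → Fin L → ℝ) (t : Fin n) : Fin d → ℝ :=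
  (ucbSig lam σ φ A t).mulVec
    ((σ ^ 2)⁻¹ • ∑ τ ∈ Finset.Iio t, ∑ e ∈ A τ, w τ e • φ e)

/-- The UCB weight ŵ_t(e) = ⟨φ_e, θ̄_t⟩ + c √(φ_eᵀ Σ_t φ_e). -/
noncomputable def ucbWeight {d L n : ℕ} (lam σ c : ℝ) (φ : Fin L → Fin d → ℝ)
    (A : Fin n → Finset (Fin L)) (w : Fin n → Fin L → ℝ) (t : Fin n) (e : Fin L) : ℝ :=
  φ e ⬝ᵥ ucbTheta lam σ φ A w t +
    c * Real.sqrt (φ e ⬝ᵥ (ucbSig lam σ φ A t).mulVec (φ e))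

/-!
On the good event every UCB weight lies between `w̄(e)` and `w̄(e) + 2c‖φ_e‖_{Σ_t}`, so
γ-approximate optimism bounds the scaled regret of round `t` by
`(2c / (1 - γ)) ∑_{e ∈ A^t} ‖φ_e‖_{Σ_t}`. These widths are controlled by the elliptical potential
argument: round `t` multiplies `det Σ_t⁻¹` by at least `1 + σ⁻² ∑_{e ∈ A^t} φ_eᵀ Σ_t φ_e`, while
AM-GM on the eigenvalues bounds the final determinant by its trace. Since each round contributes
at most `Kλ²`, concavity of `log (1 + ·)` turns the resulting bound on
`∑_t log (1 + σ⁻² ∑_e φ_eᵀ Σ_t φ_e)` into one on `∑_t ∑_e φ_eᵀ Σ_t φ_e`, and Cauchy-Schwarz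
finishes.
-/

theorem Finset.one_add_sum_le_prod_one_add {ι R : Type*} [CommSemiring R] [PartialOrder R]
    [IsOrderedRing R] (s : Finset ι) {f : ι → R} (hf : ∀ i ∈ s, 0 ≤ f i) :
    1 + ∑ i ∈ s, f i ≤ ∏ i ∈ s, (1 + f i) := by
  induction s using Finset.cons_induction with
  | empty => simp
  | cons a s ha ih =>
    have hfa : 0 ≤ f a := hf a (mem_cons_self a s)
    have hs : ∀ i ∈ s, 0 ≤ f i := fun i hi => hf i (mem_cons_of_mem hi)
    rw [sum_cons, prod_cons]
    calc 1 + (f a + ∑ i ∈ s, f i) ≤ 1 + (f a + ∑ i ∈ s, f i) + f a * ∑ i ∈ s, f i :=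
          le_add_of_nonneg_right (mul_nonneg hfa (sum_nonneg hs))
      _ = (1 + f a) * (1 + ∑ i ∈ s, f i) := by ring
      _ ≤ (1 + f a) * ∏ i ∈ s, (1 + f i) :=
          mul_le_mul_of_nonneg_left (ih hs) (add_nonneg zero_le_one hfa)

namespace Matrix

variable {m : Type*} [Fintype m]

theorem trace_mul_vecMulVec_self (N : Matrix m m ℝ) (v : m → ℝ) :
    (N * vecMulVec v v).trace = v ⬝ᵥ N *ᵥ v := by
  simp only [trace, diag, mul_apply, vecMulVec_apply, dotProduct, mulVec, Finset.mul_sum]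
  exact sum_congr rfl fun i _ => sum_congr rfl fun j _ => by ring

theorem posSemidef_sum_vecMulVec_self {ι : Type*} (φ : ι → m → ℝ) (s : Finset ι) :
    (∑ e ∈ s, vecMulVec (φ e) (φ e)).PosSemidef :=
  posSemidef_sum s fun e _ => by simpa using posSemidef_vecMulVec_self_star (φ e)

variable [DecidableEq m]

theorem PosSemidef.one_add_trace_le_det_one_add {P : Matrix m m ℝ} (hP : P.PosSemidef) :
    1 + P.trace ≤ (1 + P).det := by
  set U : Matrix m m ℝ := (hP.1.eigenvectorUnitary : Matrix m m ℝ)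
  have hUU : U * star U = 1 := Unitary.coe_mul_star_self _
  have hspec : 1 + P = U * diagonal (fun i => 1 + hP.1.eigenvalues i) * star U := by
    have hD : diagonal (fun i => 1 + hP.1.eigenvalues i) =
        1 + diagonal (RCLike.ofReal ∘ hP.1.eigenvalues) := by
      rw [← diagonal_one, diagonal_add]; rfl
    rw [hD, mul_add, add_mul, mul_one, hUU]
    congr 1
    exact hP.1.spectral_theorem
  have hdet : (1 + P).det = ∏ i, (1 + hP.1.eigenvalues i) := by
    rw [hspec, det_mul, det_mul, mul_right_comm, ← det_mul, hUU, det_one, one_mul, det_diagonal]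
  rw [hdet, hP.1.trace_eq_sum_eigenvalues]
  exact one_add_sum_le_prod_one_add _ fun i _ => hP.eigenvalues_nonneg i

theorem PosSemidef.det_le_trace_div_card_pow [Nonempty m] {A : Matrix m m ℝ}
    (hA : A.PosSemidef) : A.det ≤ (A.trace / Fintype.card m) ^ Fintype.card m := by
  set d := Fintype.card m
  set μ := hA.1.eigenvalues
  have hd : (d : ℝ) ≠ 0 := Nat.cast_ne_zero.mpr Fintype.card_ne_zero
  have hμ : ∀ i ∈ univ, 0 ≤ μ i := fun i _ => hA.eigenvalues_nonneg i
  have hamgm : ∏ i, μ i ^ (d : ℝ)⁻¹ ≤ ∑ i, (d : ℝ)⁻¹ * μ i :=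
    Real.geom_mean_le_arith_mean_weighted univ _ μ (fun _ _ => by positivity)
      (by simp [sum_const, card_univ, d, hd]) hμ
  have hdet : A.det = (∏ i, μ i ^ (d : ℝ)⁻¹) ^ d := by
    rw [hA.1.det_eq_prod_eigenvalues, ← prod_pow]
    refine prod_congr rfl fun i hi => ?_
    rw [← Real.rpow_natCast, ← Real.rpow_mul (hμ i hi), inv_mul_cancel₀ hd, Real.rpow_one]
    rfl
  have htrace : ∑ i, (d : ℝ)⁻¹ * μ i = A.trace / d := by
    rw [hA.1.trace_eq_sum_eigenvalues, ← mul_sum, inv_mul_eq_div]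
    rfl
  rw [hdet, ← htrace]
  exact pow_le_pow_left₀ (prod_nonneg fun i hi => Real.rpow_nonneg (hμ i hi) _) hamgm d

open scoped MatrixOrder in
theorem PosSemidef.trace_mul_nonneg {A B : Matrix m m ℝ} (hA : A.PosSemidef) (hB : B.PosSemidef) :
    0 ≤ (A * B).trace := by
  set R := CFC.sqrt B
  have hRR : R * R = B := CFC.sqrt_mul_sqrt_self B (nonneg_iff_posSemidef.mpr hB)
  have hR : R.IsHermitian := (nonneg_iff_posSemidef.mp (CFC.sqrt_nonneg B)).1
  rw [← hRR, ← Matrix.mul_assoc, trace_mul_cycle]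
  simpa only [hR.eq] using (hA.conjTranspose_mul_mul_same R).trace_nonneg

open scoped MatrixOrder in
theorem PosDef.det_mul_one_add_trace_le_det_add {M B : Matrix m m ℝ} (hM : M.PosDef)
    (hB : B.PosSemidef) : M.det * (1 + (M⁻¹ * B).trace) ≤ (M + B).det := by
  -- `M + B = R (1 + R⁻¹ B R⁻¹) R` with `R = √M` reduces this to the case `M = 1`.
  set R := CFC.sqrt M
  have hRR : R * R = M := CFC.sqrt_mul_sqrt_self M (nonneg_iff_posSemidef.mpr hM.posSemidef)
  have hR : R.IsHermitian := (nonneg_iff_posSemidef.mp (CFC.sqrt_nonneg M)).1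
  have hdetR : R.det * R.det = M.det := by rw [← det_mul, hRR]
  have hRunit : IsUnit R.det :=
    isUnit_iff_ne_zero.mpr fun h => hM.det_pos.ne' (by rw [← hdetR, h, mul_zero])
  set P := R⁻¹ * B * R⁻¹
  have hP : P.PosSemidef := by
    simpa only [hR.inv.eq] using hB.conjTranspose_mul_mul_same R⁻¹
  have hMB : M + B = R * (1 + P) * R := by
    rw [mul_add, add_mul, mul_one, hRR]
    congr 1
    rw [show R * (R⁻¹ * B * R⁻¹) * R = (R * R⁻¹) * B * (R⁻¹ * R) by noncomm_ring,
      mul_nonsing_inv R hRunit, nonsing_inv_mul R hRunit, one_mul, mul_one]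
  have htrace : P.trace = (M⁻¹ * B).trace := by
    rw [← hRR, Matrix.mul_inv_rev, trace_mul_cycle]
  have hdet : (M + B).det = M.det * (1 + P).det := by
    rw [hMB, det_mul, det_mul, ← hdetR]; ring
  rw [hdet, ← htrace]
  exact mul_le_mul_of_nonneg_left hP.one_add_trace_le_det_one_add hM.det_pos.le

theorem PosDef.det_mul_prod_le_det_of_succ {V B : ℕ → Matrix m m ℝ} (hV₀ : (V 0).PosDef)
    (hB : ∀ s, (B s).PosSemidef) (hV : ∀ s, V (s + 1) = V s + B s) (N : ℕ) :
    (V 0).det * ∏ s ∈ range N, (1 + ((V s)⁻¹ * B s).trace) ≤ (V N).det := by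
  have hVpos : ∀ s, (V s).PosDef := by
    intro s
    induction s with
    | zero => exact hV₀
    | succ s ih => rw [hV]; exact ih.add_posSemidef (hB s)
  induction N with
  | zero => simp
  | succ N ih =>
    have hfac : 0 ≤ 1 + ((V N)⁻¹ * B N).trace :=
      add_nonneg zero_le_one ((hVpos N).inv.posSemidef.trace_mul_nonneg (hB N))
    rw [prod_range_succ, ← mul_assoc, hV]
    exact (mul_le_mul_of_nonneg_right ih hfac).trans
      ((hVpos N).det_mul_one_add_trace_le_det_add (hB N))

theorem PosSemidef.dotProduct_inv_smul_one_add_mulVec_le {a : ℝ} (ha : 0 < a)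
    {S : Matrix m m ℝ} (hS : S.PosSemidef) (v : m → ℝ) :
    v ⬝ᵥ (a • 1 + S)⁻¹ *ᵥ v ≤ (v ⬝ᵥ v) / a := by
  set M := a • 1 + S
  have hM : M.PosDef := (PosDef.one.smul ha).add_posSemidef hS
  set u := M⁻¹ *ᵥ v
  have hMu : M *ᵥ u = v := by
    rw [mulVec_mulVec, mul_nonsing_inv _ hM.det_pos.ne'.isUnit, one_mulVec]
  have hvu : v ⬝ᵥ u = a * (u ⬝ᵥ u) + u ⬝ᵥ S *ᵥ u := by
    rw [← hMu, dotProduct_comm, add_mulVec, dotProduct_add, smul_mulVec, one_mulVec,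
      dotProduct_smul, smul_eq_mul]
  have hSu : 0 ≤ u ⬝ᵥ S *ᵥ u := by simpa using hS.dotProduct_mulVec_nonneg u
  have hsq : 0 ≤ (v - a • u) ⬝ᵥ (v - a • u) := by
    simpa using dotProduct_star_self_nonneg (v - a • u)
  have hexp : (v - a • u) ⬝ᵥ (v - a • u) = v ⬝ᵥ v - 2 * a * (v ⬝ᵥ u) + a ^ 2 * (u ⬝ᵥ u) := by
    simp only [dotProduct_sub, sub_dotProduct, dotProduct_smul, smul_dotProduct, smul_eq_mul,
      dotProduct_comm u v]
    ring
  rw [le_div_iff₀ ha]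
  nlinarith [mul_le_mul_of_nonneg_left hSu ha.le]

end Matrix

theorem Real.mul_log_one_add_le_log_one_add_mul {x y : ℝ} (hx₀ : 0 ≤ x) (hx₁ : x ≤ 1)
    (hy : 0 ≤ y) : x * Real.log (1 + y) ≤ Real.log (1 + x * y) := by
  have hy' : 0 < 1 + y := by linarith
  rw [← Real.log_rpow hy']
  exact Real.log_le_log (Real.rpow_pos_of_pos hy' x)
    (rpow_one_add_le_one_add_mul_self (by linarith) hx₀ hx₁)

theorem Finset.sum_sqrt_le_sqrt_card_mul_sum {ι : Type*} (s : Finset ι) {f : ι → ℝ}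
    (hf : ∀ i, 0 ≤ f i) : ∑ i ∈ s, √(f i) ≤ √(#s * ∑ i ∈ s, f i) := by
  simpa [mul_comm, ← Real.sqrt_mul (Nat.cast_nonneg _)] using
    Real.sum_sqrt_mul_sqrt_le s hf (g := fun _ => 1) fun _ => zero_le_one

section DesignMatrix

variable {ι m : Type*} [DecidableEq m]

/-- The matrix `Σ_s⁻¹` of the paper, with rounds indexed by `ℕ` so that it grows one round at a
time. -/
noncomputable def designMatrix (lam σ : ℝ) (φ : ι → m → ℝ) (A : ℕ → Finset ι) (s : ℕ) :
    Matrix m m ℝ :=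
  (lam ^ 2)⁻¹ • 1 + (σ ^ 2)⁻¹ • ∑ τ ∈ range s, ∑ e ∈ A τ, vecMulVec (φ e) (φ e)

variable {lam σ : ℝ} {φ : ι → m → ℝ} {A : ℕ → Finset ι}

theorem designMatrix_succ (s : ℕ) :
    designMatrix lam σ φ A (s + 1) =
      designMatrix lam σ φ A s + (σ ^ 2)⁻¹ • ∑ e ∈ A s, vecMulVec (φ e) (φ e) := by
  rw [designMatrix, designMatrix, sum_range_succ, smul_add, add_assoc]

variable [Fintype m]

theorem posDef_designMatrix (hlam : lam ≠ 0) (s : ℕ) : (designMatrix lam σ φ A s).PosDef :=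
  (PosDef.one.smul (by positivity)).add_posSemidef
    ((posSemidef_sum _ fun τ _ => posSemidef_sum_vecMulVec_self φ (A τ)).smul (by positivity))

theorem quadForm_inv_designMatrix_le (hlam : lam ≠ 0) (s : ℕ) (v : m → ℝ) :
    v ⬝ᵥ (designMatrix lam σ φ A s)⁻¹ *ᵥ v ≤ lam ^ 2 * (v ⬝ᵥ v) := by
  have h := ((posSemidef_sum (range s) fun τ _ => posSemidef_sum_vecMulVec_self φ (A τ)).smul
    (inv_nonneg.mpr (sq_nonneg σ))).dotProduct_inv_smul_one_add_mulVec_le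
      (a := (lam ^ 2)⁻¹) (by positivity) v
  rwa [div_inv_eq_mul, mul_comm] at h

theorem trace_designMatrix_le (hφ : ∀ e, φ e ⬝ᵥ φ e ≤ 1) {K : ℕ} (hA : ∀ s, #(A s) ≤ K)
    (N : ℕ) : (designMatrix lam σ φ A N).trace ≤ Fintype.card m / lam ^ 2 + N * K / σ ^ 2 := by
  have hgram : ∀ s, (∑ e ∈ A s, vecMulVec (φ e) (φ e)).trace ≤ K := fun s =>
    calc (∑ e ∈ A s, vecMulVec (φ e) (φ e)).trace = ∑ e ∈ A s, φ e ⬝ᵥ φ e := by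
          simp only [trace_sum, trace_vecMulVec]
      _ ≤ #(A s) := by simpa using sum_le_sum fun e (_ : e ∈ A s) => hφ e
      _ ≤ K := by exact_mod_cast hA s
  have hsum : (∑ s ∈ range N, (∑ e ∈ A s, vecMulVec (φ e) (φ e)).trace) ≤ N * K := by
    simpa using sum_le_sum fun s (_ : s ∈ range N) => hgram s
  rw [designMatrix, trace_add, trace_smul, trace_smul, trace_one, trace_sum, smul_eq_mul,
    smul_eq_mul, div_eq_inv_mul, div_eq_inv_mul]
  gcongr

theorem prod_one_add_quadForm_inv_designMatrix_le [Nonempty m] (hlam : lam ≠ 0)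
    (hφ : ∀ e, φ e ⬝ᵥ φ e ≤ 1) {K : ℕ} (hA : ∀ s, #(A s) ≤ K) (N : ℕ) :
    ∏ s ∈ range N, (1 + (∑ e ∈ A s, φ e ⬝ᵥ (designMatrix lam σ φ A s)⁻¹ *ᵥ φ e) / σ ^ 2) ≤
      (1 + N * K * lam ^ 2 / (Fintype.card m * σ ^ 2)) ^ Fintype.card m := by
  set d := Fintype.card m
  set V := designMatrix lam σ φ A
  have htel := PosDef.det_mul_prod_le_det_of_succ (V := V) (posDef_designMatrix hlam 0)
    (fun s => (posSemidef_sum_vecMulVec_self φ (A s)).smul (inv_nonneg.mpr (sq_nonneg σ)))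
    designMatrix_succ N
  have htrace : ∀ s, ((V s)⁻¹ * ((σ ^ 2)⁻¹ • ∑ e ∈ A s, vecMulVec (φ e) (φ e))).trace =
      (∑ e ∈ A s, φ e ⬝ᵥ (V s)⁻¹ *ᵥ φ e) / σ ^ 2 := by
    intro s
    rw [mul_smul_comm, trace_smul, mul_sum, trace_sum, smul_eq_mul, inv_mul_eq_div]
    simp only [trace_mul_vecMulVec_self]
  have hV₀ : (V 0).det = ((lam ^ 2)⁻¹) ^ d := by simp [V, designMatrix, d]
  simp only [htrace, hV₀] at htel
  have hd : (d : ℝ) ≠ 0 := Nat.cast_ne_zero.mpr Fintype.card_ne_zero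
  have hl : lam ^ 2 ≠ 0 := pow_ne_zero 2 hlam
  calc _ = (lam ^ 2) ^ d * (((lam ^ 2)⁻¹) ^ d *
          ∏ s ∈ range N, (1 + (∑ e ∈ A s, φ e ⬝ᵥ (V s)⁻¹ *ᵥ φ e) / σ ^ 2)) := by
        rw [← mul_assoc, ← mul_pow, mul_inv_cancel₀ hl, one_pow, one_mul]
    _ ≤ (lam ^ 2) ^ d * (V N).det := by gcongr
    _ ≤ (lam ^ 2) ^ d * ((V N).trace / d) ^ d := by
        gcongr; exact (posDef_designMatrix hlam N).posSemidef.det_le_trace_div_card_pow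
    _ ≤ (lam ^ 2) ^ d * ((d / lam ^ 2 + N * K / σ ^ 2) / d) ^ d := by
        have := (posDef_designMatrix (σ := σ) (φ := φ) (A := A) hlam N).posSemidef.trace_nonneg
        gcongr
        exact trace_designMatrix_le hφ hA N
    _ = _ := by
        rw [← mul_pow]
        congr 1
        field_simp

theorem sum_quadForm_inv_designMatrix_le [Nonempty m] (hlam : lam ≠ 0) (hσ : σ ≠ 0)
    (hφ : ∀ e, φ e ⬝ᵥ φ e ≤ 1) {K : ℕ} (hK : 1 ≤ K) (hA : ∀ s, #(A s) ≤ K) (N : ℕ) :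
    ∑ s ∈ range N, ∑ e ∈ A s, φ e ⬝ᵥ (designMatrix lam σ φ A s)⁻¹ *ᵥ φ e ≤
      K * lam ^ 2 * (Fintype.card m * Real.log (1 + N * K * lam ^ 2 / (Fintype.card m * σ ^ 2)) /
        Real.log (1 + lam ^ 2 / σ ^ 2)) := by
  set Z := fun s => ∑ e ∈ A s, φ e ⬝ᵥ (designMatrix lam σ φ A s)⁻¹ *ᵥ φ e
  have hKl : 0 < K * lam ^ 2 := by positivity
  have hZ₀ : ∀ s, 0 ≤ Z s := fun s => sum_nonneg fun e _ => by
    simpa using (posDef_designMatrix hlam s).inv.posSemidef.dotProduct_mulVec_nonneg (φ e)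
  have hZK : ∀ s, Z s ≤ K * lam ^ 2 := fun s =>
    calc Z s ≤ ∑ e ∈ A s, lam ^ 2 := sum_le_sum fun e _ =>
          (quadForm_inv_designMatrix_le hlam s (φ e)).trans
            (mul_le_of_le_one_right (by positivity) (hφ e))
      _ ≤ K * lam ^ 2 := by
          rw [sum_const, nsmul_eq_mul]; gcongr; exact_mod_cast hA s
  have hconc : ∀ s, Z s * Real.log (1 + K * lam ^ 2 / σ ^ 2) ≤
      K * lam ^ 2 * Real.log (1 + Z s / σ ^ 2) := fun s => by
    have h := Real.mul_log_one_add_le_log_one_add_mul (div_nonneg (hZ₀ s) hKl.le)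
      ((div_le_one hKl).mpr (hZK s)) (by positivity : 0 ≤ K * lam ^ 2 / σ ^ 2)
    rwa [div_mul_div_cancel₀ hKl.ne', div_mul_eq_mul_div, div_le_iff₀' hKl] at h
  have hlog : ∑ s ∈ range N, Real.log (1 + Z s / σ ^ 2) ≤
      Fintype.card m * Real.log (1 + N * K * lam ^ 2 / (Fintype.card m * σ ^ 2)) := by
    have hpos : ∀ s ∈ range N, 0 < 1 + Z s / σ ^ 2 := fun s _ => by
      have := hZ₀ s; positivity
    rw [← Real.log_prod (fun s hs => (hpos s hs).ne'), ← Real.log_pow]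
    exact Real.log_le_log (prod_pos hpos) (prod_one_add_quadForm_inv_designMatrix_le hlam hφ hA N)
  have hL : 0 < Real.log (1 + lam ^ 2 / σ ^ 2) := Real.log_pos (by
    have : 0 < lam ^ 2 / σ ^ 2 := by positivity
    linarith)
  have hLK : Real.log (1 + lam ^ 2 / σ ^ 2) ≤ Real.log (1 + K * lam ^ 2 / σ ^ 2) :=
    Real.log_le_log (by positivity)
      (by gcongr; exact le_mul_of_one_le_left (sq_nonneg lam) (by exact_mod_cast hK))
  rw [← mul_div_assoc, le_div_iff₀ hL]
  calc (∑ s ∈ range N, Z s) * Real.log (1 + lam ^ 2 / σ ^ 2)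
      ≤ ∑ s ∈ range N, Z s * Real.log (1 + K * lam ^ 2 / σ ^ 2) := by
        rw [sum_mul]; gcongr with s; exact hZ₀ s
    _ ≤ ∑ s ∈ range N, K * lam ^ 2 * Real.log (1 + Z s / σ ^ 2) := sum_le_sum fun s _ => hconc s
    _ ≤ _ := by rw [← mul_sum]; gcongr

theorem sum_sqrt_quadForm_inv_designMatrix_le [Nonempty m] (hlam : 0 < lam) (hσ : σ ≠ 0)
    (hφ : ∀ e, φ e ⬝ᵥ φ e ≤ 1) {K : ℕ} (hK : 1 ≤ K) (hA : ∀ s, #(A s) ≤ K) (N : ℕ) :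
    ∑ s ∈ range N, ∑ e ∈ A s, √(φ e ⬝ᵥ (designMatrix lam σ φ A s)⁻¹ *ᵥ φ e) ≤
      K * lam * √(Fintype.card m * N *
        Real.log (1 + N * K * lam ^ 2 / (Fintype.card m * σ ^ 2)) /
          Real.log (1 + lam ^ 2 / σ ^ 2)) := by
  have hz : ∀ p : (_ : ℕ) × ι, 0 ≤ φ p.2 ⬝ᵥ (designMatrix lam σ φ A p.1)⁻¹ *ᵥ φ p.2 := fun p => by
    simpa using (posDef_designMatrix hlam.ne' p.1).inv.posSemidef.dotProduct_mulVec_nonneg (φ p.2)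
  have hcard : (#((range N).sigma A) : ℝ) ≤ N * K := by
    rw [card_sigma]
    exact_mod_cast (sum_le_sum fun s _ => hA s).trans_eq (by simp)
  rw [sum_sigma']
  refine (sum_sqrt_le_sqrt_card_mul_sum _ hz).trans ?_
  rw [← sum_sigma' (range N) A fun s e => φ e ⬝ᵥ (designMatrix lam σ φ A s)⁻¹ *ᵥ φ e]
  calc _ ≤ √(N * K * (K * lam ^ 2 * (Fintype.card m *
          Real.log (1 + N * K * lam ^ 2 / (Fintype.card m * σ ^ 2)) /
            Real.log (1 + lam ^ 2 / σ ^ 2)))) :=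
        Real.sqrt_le_sqrt (mul_le_mul hcard
          (sum_quadForm_inv_designMatrix_le hlam.ne' hσ hφ hK hA N)
          (sum_nonneg fun s _ => sum_nonneg fun e _ => hz ⟨s, e⟩) (by positivity))
    _ = _ := by
        rw [← Real.sqrt_sq (by positivity : 0 ≤ K * lam), ← Real.sqrt_mul (sq_nonneg _)]
        ring_nf

end DesignMatrix

theorem ucbSig_eq_inv_designMatrix {d L n : ℕ} (lam σ : ℝ) (φ : Fin L → Fin d → ℝ)
    (A : Fin n → Finset (Fin L)) (t : Fin n) :
    ucbSig lam σ φ A t =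
      (designMatrix lam σ φ (fun s => if h : s < n then A ⟨s, h⟩ else ∅) t)⁻¹ := by
  rw [ucbSig, designMatrix, ← Nat.Iio_eq_range, ← Fin.map_valEmbedding_Iio, sum_map]
  simp

theorem ucbWeight_mem_Icc_of_abs_le {d L n : ℕ} {lam σ c : ℝ} {φ : Fin L → Fin d → ℝ}
    {A : Fin n → Finset (Fin L)} {w : Fin n → Fin L → ℝ} {θ : Fin d → ℝ} {t : Fin n} {e : Fin L}
    (h : |φ e ⬝ᵥ (ucbTheta lam σ φ A w t - θ)| ≤
      c * √(φ e ⬝ᵥ (ucbSig lam σ φ A t).mulVec (φ e))) :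
    ucbWeight lam σ c φ A w t e ∈
      Set.Icc (φ e ⬝ᵥ θ) (φ e ⬝ᵥ θ + 2 * (c * √(φ e ⬝ᵥ (ucbSig lam σ φ A t).mulVec (φ e)))) := by
  rw [dotProduct_sub, abs_le] at h
  constructor <;> (rw [ucbWeight]; linarith [h.1, h.2])

theorem sum_sub_inv_mul_sum_le_of_approx {ι : Type*} {γ : ℝ} (hγ : γ < 1) {S T : Finset ι}
    {μ u b : ι → ℝ} (hlow : ∀ e ∈ S, μ e ≤ u e) (hup : ∀ e ∈ T, u e ≤ μ e + 2 * b e)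
    (happrox : (1 - γ) * ∑ e ∈ S, u e ≤ ∑ e ∈ T, u e) :
    ∑ e ∈ S, μ e - (1 - γ)⁻¹ * ∑ e ∈ T, μ e ≤ (1 - γ)⁻¹ * (2 * ∑ e ∈ T, b e) := by
  have h1γ : 0 < 1 - γ := sub_pos.mpr hγ
  have hS : ∑ e ∈ S, μ e ≤ (1 - γ)⁻¹ * ∑ e ∈ T, u e :=
    (sum_le_sum hlow).trans ((le_inv_mul_iff₀ h1γ).mpr happrox)
  have hT : ∑ e ∈ T, u e ≤ ∑ e ∈ T, μ e + 2 * ∑ e ∈ T, b e := by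
    rw [mul_sum, ← sum_add_distrib]; exact sum_le_sum hup
  have := mul_le_mul_of_nonneg_left hT (inv_nonneg.mpr h1γ.le)
  rw [mul_add] at this
  linarith

theorem stmt_17_general {d L n K : ℕ} (hd : 0 < d) (hK : 1 ≤ K)
    (lam σ c γ : ℝ) (hlam : 0 < lam) (hσ : 0 < σ) (hc : 0 < c)
    (hγ : γ ∈ Set.Ico (0 : ℝ) 1)
    (θs : Fin d → ℝ) (φ : Fin L → Fin d → ℝ)
    (hφ : ∀ e, Real.sqrt (φ e ⬝ᵥ φ e) ≤ 1)
    (𝒜 : Finset (Finset (Fin L))) (h𝒜 : ∀ B ∈ 𝒜, B.card ≤ K)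
    (A : Fin n → Finset (Fin L)) (hA : ∀ t, A t ∈ 𝒜)
    (w : Fin n → Fin L → ℝ)
    (hconf : ∀ t e, |φ e ⬝ᵥ (ucbTheta lam σ φ A w t - θs)| ≤
      c * Real.sqrt (φ e ⬝ᵥ (ucbSig lam σ φ A t).mulVec (φ e)))
    (hopt : ∀ t, ∀ B ∈ 𝒜,
      (1 - γ) * ∑ e ∈ B, ucbWeight lam σ c φ A w t e ≤
        ∑ e ∈ A t, ucbWeight lam σ c φ A w t e)
    (Aopt : Finset (Fin L)) (hAopt : Aopt ∈ 𝒜) :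
    ∑ t, ((∑ e ∈ Aopt, φ e ⬝ᵥ θs) - (1 - γ)⁻¹ * ∑ e ∈ A t, φ e ⬝ᵥ θs) ≤
      2 * c * K * lam / (1 - γ) *
        Real.sqrt (d * n * Real.log (1 + n * K * lam ^ 2 / (d * σ ^ 2)) /
          Real.log (1 + lam ^ 2 / σ ^ 2)) := by
  obtain ⟨-, hγ₁⟩ := hγ
  have : Nonempty (Fin d) := Fin.pos_iff_nonempty.mp hd
  set width : Fin n → Fin L → ℝ := fun t e => √(φ e ⬝ᵥ (ucbSig lam σ φ A t).mulVec (φ e))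
  have hround : ∀ t, (∑ e ∈ Aopt, φ e ⬝ᵥ θs) - (1 - γ)⁻¹ * ∑ e ∈ A t, φ e ⬝ᵥ θs ≤
      (1 - γ)⁻¹ * (2 * ∑ e ∈ A t, c * width t e) := fun t =>
    sum_sub_inv_mul_sum_le_of_approx hγ₁ (fun e _ => (ucbWeight_mem_Icc_of_abs_le (hconf t e)).1)
      (fun e _ => (ucbWeight_mem_Icc_of_abs_le (hconf t e)).2) (hopt t Aopt hAopt)
  set B : ℕ → Finset (Fin L) := fun s => if h : s < n then A ⟨s, h⟩ else ∅
  have hB : ∀ s, #(B s) ≤ K := fun s => by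
    by_cases h : s < n <;> simp [B, h, h𝒜 _ (hA _)]
  have hwidth : ∑ t, ∑ e ∈ A t, width t e ≤ K * lam *
      √(d * n * Real.log (1 + n * K * lam ^ 2 / (d * σ ^ 2)) / Real.log (1 + lam ^ 2 / σ ^ 2)) := by
    have h := sum_sqrt_quadForm_inv_designMatrix_le hlam hσ.ne'
      (fun e => Real.sqrt_le_one.mp (hφ e)) hK hB n
    rw [← Fin.sum_univ_eq_sum_range, Fintype.card_fin] at h
    simpa [width, B, ucbSig_eq_inv_designMatrix] using h
  calc _ ≤ ∑ t, (1 - γ)⁻¹ * (2 * ∑ e ∈ A t, c * width t e) := sum_le_sum fun t _ => hround t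
    _ = 2 * c / (1 - γ) * ∑ t, ∑ e ∈ A t, width t e := by
        simp only [← mul_sum]; ring
    _ ≤ 2 * c / (1 - γ) * (K * lam * √(d * n * Real.log (1 + n * K * lam ^ 2 / (d * σ ^ 2)) /
          Real.log (1 + lam ^ 2 / σ ^ 2))) :=
        mul_le_mul_of_nonneg_left hwidth (div_nonneg (by positivity) (sub_pos.mpr hγ₁).le)
    _ = _ := by ring

/-- the deterministic 'good event' scaled regret bound for CombLinUCB with a
γ-approximate maximization oracle. Under (a) the confidence inequalities
|⟨φ_e, θ̄_t − θ*⟩| ≤ c √(φ_eᵀ Σ_t φ_e) and (b) γ-approximate optimism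
Σ_{e∈A^t} ŵ_t(e) ≥ (1−γ) max_{A∈𝒜} Σ_{e∈A} ŵ_t(e), for any A^opt ∈ 𝒜 maximizing the mean
weights w̄(e) = ⟨φ_e, θ*⟩:
Σ_{t=1}^n [ Σ_{e∈A^opt} w̄(e) − (1/(1−γ)) Σ_{e∈A^t} w̄(e) ]
  ≤ (2 c K λ/(1−γ)) √( d n ln(1 + nKλ²/(dσ²)) / ln(1 + λ²/σ²) ). -/
theorem stmt_17 {d L n K : ℕ} (hd : 0 < d) (hK : 1 ≤ K)
    (lam σ c γ : ℝ) (hlam : 0 < lam) (hσ : 0 < σ) (hc : 0 < c)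
    (hγ : γ ∈ Set.Ico (0 : ℝ) 1)
    (θs : Fin d → ℝ) (φ : Fin L → Fin d → ℝ)
    (hφ : ∀ e, Real.sqrt (φ e ⬝ᵥ φ e) ≤ 1)
    (𝒜 : Finset (Finset (Fin L))) (h𝒜 : ∀ B ∈ 𝒜, B.card ≤ K)
    (A : Fin n → Finset (Fin L)) (hA : ∀ t, A t ∈ 𝒜)
    (w : Fin n → Fin L → ℝ)
    (hconf : ∀ t e, |φ e ⬝ᵥ (ucbTheta lam σ φ A w t - θs)| ≤
      c * Real.sqrt (φ e ⬝ᵥ (ucbSig lam σ φ A t).mulVec (φ e)))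
    (hopt : ∀ t, ∀ B ∈ 𝒜,
      (1 - γ) * ∑ e ∈ B, ucbWeight lam σ c φ A w t e ≤
        ∑ e ∈ A t, ucbWeight lam σ c φ A w t e)
    (Aopt : Finset (Fin L)) (hAopt : Aopt ∈ 𝒜)
    (hAoptOpt : ∀ B ∈ 𝒜, ∑ e ∈ B, φ e ⬝ᵥ θs ≤ ∑ e ∈ Aopt, φ e ⬝ᵥ θs) :
    ∑ t, ((∑ e ∈ Aopt, φ e ⬝ᵥ θs) - (1 - γ)⁻¹ * ∑ e ∈ A t, φ e ⬝ᵥ θs) ≤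
      2 * c * K * lam / (1 - γ) *
        Real.sqrt (d * n * Real.log (1 + n * K * lam ^ 2 / (d * σ ^ 2)) /
          Real.log (1 + lam ^ 2 / σ ^ 2)) :=
  stmt_17_general hd hK lam σ c γ hlam hσ hc hγ θs φ hφ 𝒜 h𝒜 A hA w hconf hopt Aopt hAopt
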